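/- arXiv:2302.07469 — 2 statements merged into one kernel-verified Lean document; each statement's English description precedes it below -/
import Mathlib

section
/- Suppose a real random sequence (h_k) adapted to a Markov chain satisfies E[h_{k+1} | x_k] ≥ α h_k + δ almost surely, with α ∈ (0,1), h_k ≤ M a.s. for all k, and δ ≤ M(1−α). Set φ = M(1−α) − δ ≥ 0 and fix θ ∈ (1, 1/α]. Then W_k = (M − h_k)θ^k + φ Σ_{i=k+1}^{K} θ^i is a nonnegative supermartingale for k ∈ {0,…,K}: W_k ≥ 0 and E[W_{k+1} | x_{0:k}] ≤ W_k. -/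
/-!
Since `M - α h_k - δ = α (M - h_k) + φ`, the drift bound gives
`E[M - h_{k+1} | ℱ_k] ≤ α (M - h_k) + φ`. Multiplying by `θ^{k+1}` and using `α θ ≤ 1`,
the conditional expectation of `W_{k+1}` exceeds `(M - h_k) θ^k` by at most `φ θ^{k+1}`,
which is exactly the term the tail sum `φ ∑_{i > k} θ^i` loses between `k` and `k + 1`.
-/

namespace MeasureTheory

theorem condExp_const_add_const_mul {Ω : Type*} {m m0 : MeasurableSpace Ω} {μ : Measure Ω}
    [IsFiniteMeasure μ] (hm : m ≤ m0) {f : Ω → ℝ} (hf : Integrable f μ) (a b : ℝ) :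
    μ[fun ω => a + b * f ω|m] =ᵐ[μ] fun ω => a + b * μ[f|m] ω := by
  have hsum := condExp_add (m := m) (integrable_const a) (hf.const_mul b)
  filter_upwards [hsum, condExp_smul (μ := μ) (m := m) b f] with ω h_add h_smul
  simp only [Pi.add_apply, condExp_const hm] at h_add
  exact h_add.trans (congrArg (a + ·) h_smul)

end MeasureTheory

theorem sum_Icc_pow_eq_pow_add {R : Type*} [CommSemiring R] (θ : R) {k K : ℕ} (hk : k < K) :
    ∑ i ∈ Finset.Icc (k + 1) K, θ ^ i = θ ^ (k + 1) + ∑ i ∈ Finset.Icc (k + 2) K, θ ^ i := by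
  rw [← Finset.add_sum_Ioc_eq_sum_Icc (by omega), ← Finset.Icc_add_one_left_eq_Ioc]
  rfl

theorem barrier_step_le {α δ M θ h c t : ℝ} (hαθ : α * θ ≤ 1) (ht : 0 ≤ t)
    (hθ : 0 ≤ θ) (hh : h ≤ M) (hc : α * h + δ ≤ c) :
    (M - c) * (θ * t) ≤ (M - h) * t + (M * (1 - α) - δ) * (θ * t) := by
  have hgap : 0 ≤ (M - h) * t := mul_nonneg (sub_nonneg.2 hh) ht
  calc (M - c) * (θ * t)
      ≤ (M - (α * h + δ)) * (θ * t) := by gcongr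
    _ = (α * θ) * ((M - h) * t) + (M * (1 - α) - δ) * (θ * t) := by ring
    _ ≤ (M - h) * t + (M * (1 - α) - δ) * (θ * t) := by
      gcongr ?_ + _
      exact mul_le_of_le_one_left hgap hαθ

open MeasureTheory in
theorem W_supermartingale_general {n : ℕ} {Ω : Type*} {m0 : MeasurableSpace Ω} {μ : Measure Ω}
    [IsProbabilityMeasure μ] (ℱ : Filtration ℕ m0)
    (x : ℕ → Ω → (Fin n → ℝ)) (hfun : (Fin n → ℝ) → ℝ)
    (hint : ∀ k, Integrable (fun ω => hfun (x k ω)) μ)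
    (α δ M : ℝ) (hα : α ∈ Set.Ioo (0 : ℝ) 1)
    (hbdd : ∀ k, ∀ᵐ ω ∂μ, hfun (x k ω) ≤ M)
    (hδ : δ ≤ M * (1 - α))
    (hcond : ∀ k, (fun ω => α * hfun (x k ω) + δ) ≤ᵐ[μ] μ[fun ω => hfun (x (k + 1) ω)|ℱ k])
    (φ : ℝ) (hφ : φ = M * (1 - α) - δ)
    (θ : ℝ) (hθ : θ ∈ Set.Ioc (1 : ℝ) (1 / α)) (K : ℕ)
    (W : ℕ → Ω → ℝ)
    (hW : ∀ k ω, W k ω = (M - hfun (x k ω)) * θ ^ k + φ * ∑ i ∈ Finset.Icc (k + 1) K, θ ^ i) :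
    (0 ≤ φ) ∧ (∀ k ≤ K, ∀ᵐ ω ∂μ, 0 ≤ W k ω) ∧
    (∀ k < K, μ[W (k + 1)|ℱ k] ≤ᵐ[μ] W k) := by
  obtain ⟨hα0, -⟩ := hα
  obtain ⟨hθ1, hθα⟩ := hθ
  have hθ0 : 0 ≤ θ := zero_le_one.trans hθ1.le
  have hαθ : α * θ ≤ 1 := by rwa [le_div_iff₀ hα0, mul_comm] at hθα
  have hφ0 : 0 ≤ φ := by linarith
  refine ⟨hφ0, fun k _ => ?_, fun k hk => ?_⟩
  · filter_upwards [hbdd k] with ω hb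
    rw [hW]
    exact add_nonneg (mul_nonneg (sub_nonneg.2 hb) (pow_nonneg hθ0 k))
      (mul_nonneg hφ0 (Finset.sum_nonneg fun i _ => pow_nonneg hθ0 i))
  · set tail := φ * ∑ i ∈ Finset.Icc (k + 2) K, θ ^ i
    have hW_succ : W (k + 1) =
        fun ω => (M * θ ^ (k + 1) + tail) + -θ ^ (k + 1) * hfun (x (k + 1) ω) := by
      funext ω; rw [hW]; ring
    have hce := condExp_const_add_const_mul (ℱ.le k) (hint (k + 1)) (M * θ ^ (k + 1) + tail)
      (-θ ^ (k + 1))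
    rw [← hW_succ] at hce
    filter_upwards [hce, hcond k, hbdd k] with ω hce_ω hdrift hb
    have hstep := barrier_step_le hαθ (pow_nonneg hθ0 k) hθ0 hb hdrift
    rw [← pow_succ', ← hφ] at hstep
    rw [hce_ω, hW, sum_Icc_pow_eq_pow_add θ hk]
    linarith

open MeasureTheory in
/-- the scaled-and-shifted barrier process W is a nonnegative supermartingale. -/
theorem W_supermartingale {n : ℕ} {Ω : Type*} {m0 : MeasurableSpace Ω} {μ : Measure Ω}
    [IsProbabilityMeasure μ] (ℱ : Filtration ℕ m0)
    (x : ℕ → Ω → (Fin n → ℝ)) (hfun : (Fin n → ℝ) → ℝ)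
    (hadapted : Adapted ℱ (fun k ω => hfun (x k ω)))
    (hint : ∀ k, Integrable (fun ω => hfun (x k ω)) μ)
    (α δ M : ℝ) (hα : α ∈ Set.Ioo (0 : ℝ) 1) (hM : 0 < M)
    (hbdd : ∀ k, ∀ᵐ ω ∂μ, hfun (x k ω) ≤ M)
    (hδ : δ ≤ M * (1 - α))
    (hcond : ∀ k, (fun ω => α * hfun (x k ω) + δ) ≤ᵐ[μ] μ[fun ω => hfun (x (k + 1) ω)|ℱ k])
    (φ : ℝ) (hφ : φ = M * (1 - α) - δ)
    (θ : ℝ) (hθ : θ ∈ Set.Ioc (1 : ℝ) (1 / α)) (K : ℕ)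
    (W : ℕ → Ω → ℝ)
    (hW : ∀ k ω, W k ω = (M - hfun (x k ω)) * θ ^ k + φ * ∑ i ∈ Finset.Icc (k + 1) K, θ ^ i) :
    (0 ≤ φ) ∧ (∀ k ≤ K, ∀ᵐ ω ∂μ, 0 ≤ W k ω) ∧
    (∀ k < K, μ[W (k + 1)|ℱ k] ≤ᵐ[μ] W k) :=
  W_supermartingale_general ℱ x hfun hint α δ M hα hbdd hδ hcond φ hφ θ hθ K W hW
end

section
/- Let x_{k+1} = A x_k + B u_k + d with d ~ N(0, Q) a Gaussian vector, h(x) = −max_i (c_iᵀx − w_i), μ_i = c_iᵀ(A x_k + B u_k) − w_i, and σ_i = c_iᵀ Q c_i. Then for every t > 0, −E[h(x_{k+1})] ≤ (1/t) log(Σ_{i=1}^{n_c} exp(t μ_i + (t²/2) σ_i)). -/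
/-!
Write `r_i = c_iᵀ x_{k+1} - w_i`, so that `-h(x_{k+1}) = max_i r_i` and `r_i ~ N(μ_i, σ_i)`.
Since `exp (t max_i r_i) ≤ ∑ i, exp (t r_i)`, Jensen's inequality for the convex exponential gives
`exp (t E[max_i r_i]) ≤ ∑ i, E[exp (t r_i)] = ∑ i, exp (t μ_i + t² σ_i / 2)`, the Gaussian moment
generating function; take logarithms and divide by `t > 0`.
-/

open MeasureTheory ProbabilityTheory Real

section

variable {Ω ι : Type*} {mΩ : MeasurableSpace Ω} {μ : Measure Ω}

theorem MeasureTheory.Integrable.finset_sup' {s : Finset ι} (hs : s.Nonempty) {X : ι → Ω → ℝ}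
    (hX : ∀ i ∈ s, Integrable (X i) μ) :
    Integrable (fun ω ↦ s.sup' hs (X · ω)) μ := by
  simpa only [← Finset.sup'_apply] using
    Finset.sup'_induction hs X (p := (Integrable · μ)) (fun _ h₁ _ h₂ ↦ h₁.sup h₂) hX

theorem Real.exp_sup'_le_sum_exp {s : Finset ι} (hs : s.Nonempty) (f : ι → ℝ) :
    exp (s.sup' hs f) ≤ ∑ i ∈ s, exp (f i) := by
  obtain ⟨j, hj, hjmax⟩ := s.exists_mem_eq_sup' hs f
  rw [hjmax]
  exact Finset.single_le_sum (fun i _ ↦ (exp_pos (f i)).le) hj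

theorem Real.exp_integral_le_integral_exp [IsProbabilityMeasure μ] {f : Ω → ℝ}
    (hf : Integrable f μ) (hexp : Integrable (fun ω ↦ exp (f ω)) μ) :
    exp (∫ ω, f ω ∂μ) ≤ ∫ ω, exp (f ω) ∂μ :=
  convexOn_exp.map_integral_le continuous_exp.continuousOn isClosed_univ
    (ae_of_all _ fun _ ↦ Set.mem_univ _) hf hexp

theorem ProbabilityTheory.integral_sup'_le_log_sum_mgf [IsProbabilityMeasure μ]
    {s : Finset ι} (hs : s.Nonempty) {X : ι → Ω → ℝ} (hX : ∀ i ∈ s, Integrable (X i) μ)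
    {t : ℝ} (ht : 0 < t) (hexp : ∀ i ∈ s, Integrable (fun ω ↦ exp (t * X i ω)) μ) :
    ∫ ω, s.sup' hs (X · ω) ∂μ ≤ (1 / t) * log (∑ i ∈ s, mgf (X i) μ t) := by
  set M := fun ω ↦ s.sup' hs (X · ω)
  have hM : Integrable M μ := Integrable.finset_sup' hs hX
  have hsum : Integrable (fun ω ↦ ∑ i ∈ s, exp (t * X i ω)) μ := integrable_finsetSum s hexp
  have hexp_le : ∀ ω, exp (t * M ω) ≤ ∑ i ∈ s, exp (t * X i ω) := fun ω ↦ by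
    simpa only [M, Finset.mul₀_sup' ht.le] using exp_sup'_le_sum_exp hs (t * X · ω)
  have hexpM : Integrable (fun ω ↦ exp (t * M ω)) μ :=
    hsum.mono' (continuous_exp.comp_aestronglyMeasurable (hM.aestronglyMeasurable.const_mul t))
      (ae_of_all _ fun ω ↦ (abs_of_pos (exp_pos _)).trans_le (hexp_le ω))
  have hsum_pos : 0 < ∑ i ∈ s, mgf (X i) μ t :=
    Finset.sum_pos (fun i hi ↦ mgf_pos_iff.mpr (hexp i hi)) hs
  rw [one_div_mul_eq_div, le_div_iff₀' ht, le_log_iff_exp_le hsum_pos, ← integral_const_mul]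
  calc exp (∫ ω, t * M ω ∂μ) ≤ ∫ ω, exp (t * M ω) ∂μ :=
        exp_integral_le_integral_exp (hM.const_mul t) hexpM
    _ ≤ ∫ ω, ∑ i ∈ s, exp (t * X i ω) ∂μ := integral_mono hexpM hsum hexp_le
    _ = ∑ i ∈ s, mgf (X i) μ t := integral_finsetSum s hexp

theorem ProbabilityTheory.HasLaw.integrable_of_gaussianReal {X : Ω → ℝ} {m : ℝ} {v : NNReal}
    (hX : HasLaw X (gaussianReal m v) μ) : Integrable X μ := by
  have h : Integrable id (μ.map X) := hX.map_eq ▸ (memLp_id_gaussianReal 1).integrable le_rfl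
  exact (integrable_map_measure aestronglyMeasurable_id hX.aemeasurable).mp h

end

open MeasureTheory ProbabilityTheory Matrix Finset in
theorem polytope_barrier_bound_general {n m nc : ℕ} (hnc : 0 < nc)
    {Ω : Type*} [MeasurableSpace Ω] (μ : Measure Ω) [IsProbabilityMeasure μ]
    (A : Matrix (Fin n) (Fin n) ℝ) (B : Matrix (Fin n) (Fin m) ℝ)
    (Q : Matrix (Fin n) (Fin n) ℝ) (hQ : Q.PosSemidef)
    (d : Ω → (Fin n → ℝ))
    (hgauss : ∀ v : Fin n → ℝ,
      Measure.map (fun ω => v ⬝ᵥ d ω) μ = gaussianReal 0 (Real.toNNReal (v ⬝ᵥ Q.mulVec v)))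
    (C : Matrix (Fin nc) (Fin n) ℝ) (w : Fin nc → ℝ)
    (h : (Fin n → ℝ) → ℝ)
    (hh : ∀ y, h y = -(univ.sup' (univ_nonempty_iff.mpr (Fin.pos_iff_nonempty.mp hnc))
        (fun i => C i ⬝ᵥ y - w i)))
    (xk : Fin n → ℝ) (u : Fin m → ℝ)
    (xnext : Ω → (Fin n → ℝ)) (hxnext : ∀ ω, xnext ω = A.mulVec xk + B.mulVec u + d ω)
    (mu : Fin nc → ℝ) (hmu : ∀ i, mu i = C i ⬝ᵥ (A.mulVec xk + B.mulVec u) - w i)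
    (sig : Fin nc → ℝ) (hsig : ∀ i, sig i = C i ⬝ᵥ Q.mulVec (C i))
    (t : ℝ) (ht : 0 < t) :
    -(∫ ω, h (xnext ω) ∂μ)
      ≤ (1 / t) * Real.log (∑ i, Real.exp (t * mu i + t ^ 2 / 2 * sig i)) := by
  have hne : (univ : Finset (Fin nc)).Nonempty := univ_nonempty_iff.mpr ⟨⟨0, hnc⟩⟩
  set r : Fin nc → Ω → ℝ := fun i ω ↦ C i ⬝ᵥ xnext ω - w i
  have hlaw : ∀ i, HasLaw (r i) (gaussianReal (mu i) (sig i).toNNReal) μ := fun i ↦ by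
    have hd : HasLaw (C i ⬝ᵥ d ·) (gaussianReal 0 (sig i).toNNReal) μ := by
      rw [hsig]
      exact ⟨aemeasurable_of_map_neZero (by rw [hgauss]; infer_instance), hgauss (C i)⟩
    refine (zero_add (mu i) ▸ gaussianReal_const_add hd (mu i)).congr (ae_of_all _ fun ω ↦ ?_)
    simp only [r, hxnext, hmu, dotProduct_add]
    ring
  have hmgf : ∀ i, mgf (r i) μ t = exp (t * mu i + t ^ 2 / 2 * sig i) := fun i ↦ by
    have hsig_nonneg : 0 ≤ sig i := hsig i ▸ hQ.dotProduct_mulVec_nonneg (C i)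
    rw [mgf_gaussianReal (hlaw i).map_eq, Real.coe_toNNReal _ hsig_nonneg]
    ring_nf
  calc -(∫ ω, h (xnext ω) ∂μ) = ∫ ω, univ.sup' hne (r · ω) ∂μ := by
        simp only [hh, integral_neg, neg_neg, r]
    _ ≤ (1 / t) * log (∑ i, mgf (r i) μ t) :=
        integral_sup'_le_log_sum_mgf hne (fun i _ ↦ (hlaw i).integrable_of_gaussianReal) ht
          fun i _ ↦ mgf_pos_iff.mp (hmgf i ▸ exp_pos _)
    _ = _ := by simp only [hmgf]

open MeasureTheory ProbabilityTheory Matrix Finset in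
/-- log-sum-exp bound on the expected polytopic barrier under
    linear-Gaussian dynamics.  The Gaussian vector d ~ N(0, Q) is characterized by the
    law of each linear functional v ⬝ d being N(0, vᵀQv). -/
theorem polytope_barrier_bound {n m nc : ℕ} (hnc : 0 < nc)
    {Ω : Type*} [MeasurableSpace Ω] (μ : Measure Ω) [IsProbabilityMeasure μ]
    (A : Matrix (Fin n) (Fin n) ℝ) (B : Matrix (Fin n) (Fin m) ℝ)
    (Q : Matrix (Fin n) (Fin n) ℝ) (hQ : Q.PosSemidef)
    (d : Ω → (Fin n → ℝ)) (hdmeas : Measurable d)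
    (hgauss : ∀ v : Fin n → ℝ,
      Measure.map (fun ω => v ⬝ᵥ d ω) μ = gaussianReal 0 (Real.toNNReal (v ⬝ᵥ Q.mulVec v)))
    (C : Matrix (Fin nc) (Fin n) ℝ) (w : Fin nc → ℝ)
    (h : (Fin n → ℝ) → ℝ)
    (hh : ∀ y, h y = -(univ.sup' (univ_nonempty_iff.mpr (Fin.pos_iff_nonempty.mp hnc))
        (fun i => C i ⬝ᵥ y - w i)))
    (xk : Fin n → ℝ) (u : Fin m → ℝ)
    (xnext : Ω → (Fin n → ℝ)) (hxnext : ∀ ω, xnext ω = A.mulVec xk + B.mulVec u + d ω)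
    (mu : Fin nc → ℝ) (hmu : ∀ i, mu i = C i ⬝ᵥ (A.mulVec xk + B.mulVec u) - w i)
    (sig : Fin nc → ℝ) (hsig : ∀ i, sig i = C i ⬝ᵥ Q.mulVec (C i))
    (t : ℝ) (ht : 0 < t) :
    -(∫ ω, h (xnext ω) ∂μ)
      ≤ (1 / t) * Real.log (∑ i, Real.exp (t * mu i + t ^ 2 / 2 * sig i)) :=
  polytope_barrier_bound_general hnc μ A B Q hQ d hgauss C w h hh xk u xnext hxnext mu hmu sig hsig
    t ht
end
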